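/- arXiv:1512.00802 — 6 statements merged into one kernel-verified Lean document; each statement's English description precedes it below -/
import Mathlib

section
/- The steady-state matrix of the parallel composition of two discrete dynamical systems equals the Kronecker (tensor) product of their steady-state matrices. Precisely: let F1 = (S1, r1, u1) be an (A1,B1)-discrete system and F2 = (S2, r2, u2) an (A2,B2)-discrete system, and let F1 ⊠ F2 be the (A1 × A2, B1 × B2)-system on S1 × S2 with readout (s1,s2) ↦ (r1 s1, r2 s2) and update ((a1,a2),(s1,s2)) ↦ (u1(a1,s1), u2(a2,s2)). Then for all a1, a2, b1, b2, Stst(F1 ⊠ F2)((a1,a2),(b1,b2)) = Stst(F1)(a1,b1) · Stst(F2)(a2,b2), where multiplication is in ℕ∞ (cardinal counts, with ∞·0 = 0). -/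
universe u

/-- The steady-state matrix of a parallel composition of discrete systems is the
Kronecker product of the steady-state matrices. -/
theorem stst_parallel {A1 A2 B1 B2 S1 S2 : Type u}
    (r1 : S1 → B1) (u1 : A1 × S1 → S1) (r2 : S2 → B2) (u2 : A2 × S2 → S2)
    (a1 : A1) (a2 : A2) (b1 : B1) (b2 : B2) :
    Cardinal.mk {p : S1 × S2 //
        (r1 p.1, r2 p.2) = (b1, b2) ∧
        (u1 (a1, p.1), u2 (a2, p.2)) = p} =
      Cardinal.mk {s : S1 // r1 s = b1 ∧ u1 (a1, s) = s} *
      Cardinal.mk {s : S2 // r2 s = b2 ∧ u2 (a2, s) = s} := by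
  have e : {p : S1 × S2 //
        (r1 p.1, r2 p.2) = (b1, b2) ∧
        (u1 (a1, p.1), u2 (a2, p.2)) = p} ≃
      {s : S1 // r1 s = b1 ∧ u1 (a1, s) = s} ×
      {s : S2 // r2 s = b2 ∧ u2 (a2, s) = s} :=
    { toFun := fun ⟨p, h⟩ =>
        (⟨p.1, ⟨(Prod.mk.injEq _ _ _ _ ▸ h.1).1, (Prod.mk.injEq _ _ _ _ ▸ h.2).1⟩⟩,
         ⟨p.2, ⟨(Prod.mk.injEq _ _ _ _ ▸ h.1).2, (Prod.mk.injEq _ _ _ _ ▸ h.2).2⟩⟩)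
      invFun := fun ⟨⟨s1, h1⟩, ⟨s2, h2⟩⟩ =>
        ⟨(s1, s2), by simp [h1.1, h1.2, h2.1, h2.2]⟩
      left_inv := fun ⟨p, h⟩ => rfl
      right_inv := fun ⟨⟨s1, h1⟩, ⟨s2, h2⟩⟩ => rfl }
  rw [Cardinal.mk_congr e, Cardinal.mk_prod, Cardinal.lift_id, Cardinal.lift_id]
end

section
/- Feedback composition of a discrete dynamical system corresponds to partial trace of its steady-state matrix. Precisely: let F = (S, r, u) be a discrete system with input set A × C and output set B × C, writing r = (rB, rC). Define the feedback system G on the same state set S with input set A, output set B, readout rB, and update uG(a, s) = u((a, rC(s)), s). Then for all a ∈ A and b ∈ B, Stst(G)(a,b) = ∑_{c ∈ C} Stst(F)((a,c),(b,c)), the sum taken in ℕ∞. -/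
universe u v

private def sigmaOptionEquiv {α : Type*} (g : Option α → Type v) :
    (Σ i : Option α, g i) ≃ (g none ⊕ Σ a : α, g (some a)) where
  toFun x := match x with
    | ⟨none, y⟩ => Sum.inl y
    | ⟨some a, y⟩ => Sum.inr ⟨a, y⟩
  invFun x := match x with
    | Sum.inl y => ⟨none, y⟩
    | Sum.inr ⟨a, y⟩ => ⟨some a, y⟩
  left_inv := by rintro ⟨(_ | a), y⟩ <;> rfl
  right_inv := by rintro (y | ⟨a, y⟩) <;> rfl

private theorem cardinal_sum_eq_finset_sum {ι : Type u} [inst : Fintype ι]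
    (f : ι → Cardinal.{u}) : Cardinal.sum f = ∑ i, f i := by
  revert f
  refine Fintype.induction_empty_option
    (P := fun α _ => ∀ f : α → Cardinal.{u}, Cardinal.sum f = ∑ i, f i) ?_ ?_ ?_ ι
  · intro α β _ e h f
    letI := Fintype.ofEquiv β e.symm
    have := h (f ∘ e)
    calc Cardinal.sum f
        = Cardinal.mk (Σ b, (f b).out) := rfl
      _ = Cardinal.mk (Σ a, (f (e a)).out) := (Cardinal.mk_congr (Equiv.sigmaCongrLeft e)).symm
      _ = Cardinal.sum (f ∘ e) := rfl
      _ = ∑ a, (f ∘ e) a := this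
      _ = ∑ b, f b := by
          exact Fintype.sum_equiv e _ _ fun a => rfl
  · intro f
    have : IsEmpty (Σ i : PEmpty, (f i).out) := by infer_instance
    rw [show Cardinal.sum f = Cardinal.mk (Σ i : PEmpty, (f i).out) from rfl,
      Cardinal.mk_eq_zero]
    simp
  · intro α _ h f
    calc Cardinal.sum f
        = Cardinal.mk (Σ i : Option α, (f i).out) := rfl
      _ = Cardinal.mk ((f none).out ⊕ Σ a : α, (f (some a)).out) :=
          Cardinal.mk_congr (sigmaOptionEquiv _)
      _ = Cardinal.mk (f none).out + Cardinal.mk (Σ a : α, (f (some a)).out) := by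
          rw [Cardinal.mk_sum, Cardinal.lift_id, Cardinal.lift_id]
      _ = f none + Cardinal.sum (fun a => f (some a)) := by rw [Cardinal.mk_out]; rfl
      _ = f none + ∑ a : α, f (some a) := by rw [h _]
      _ = ∑ i : Option α, f i := by rw [Fintype.sum_option]

/-- Feedback composition of a discrete system corresponds to the partial trace of its
steady-state matrix. -/
theorem stst_feedback {A B C S : Type u} [Fintype C]
    (rB : S → B) (rC : S → C) (u : (A × C) × S → S)
    (a : A) (b : B) :
    Cardinal.mk {s : S // rB s = b ∧ u ((a, rC s), s) = s} =
      ∑ c : C, Cardinal.mk {s : S // (rB s, rC s) = (b, c) ∧ u ((a, c), s) = s} := by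
  have key : (∑ c : C, Cardinal.mk {s : S // (rB s, rC s) = (b, c) ∧ u ((a, c), s) = s})
      = Cardinal.mk (Σ c : C, {s : S // (rB s, rC s) = (b, c) ∧ u ((a, c), s) = s}) := by
    rw [Cardinal.mk_sigma, cardinal_sum_eq_finset_sum]
  rw [key]
  apply Cardinal.mk_congr
  refine ⟨fun s => ⟨rC s.1, s.1, ?_⟩, fun x => ⟨x.2.1, ?_⟩, ?_, ?_⟩
  · exact ⟨by simp [s.2.1], s.2.2⟩
  · obtain ⟨c, s, h1, h2⟩ := x
    injection h1 with hb hc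
    subst hc
    exact ⟨hb, h2⟩
  · intro s; rfl
  · rintro ⟨c, s, h1, h2⟩
    have hc : rC s = c := (Prod.mk.injEq _ _ _ _ ▸ h1).2
    subst hc; rfl
end

section
/- Let X, Y, Z be pairs of types (Xin, Xout), (Yin, Yout), (Zin, Zout). A wiring diagram φ : X → Y consists of functions φin : Yin × Xout → Xin and φout : Xout → Yout; similarly ψ : Y → Z consists of ψin : Zin × Yout → Yin and ψout : Yout → Zout. Their composite ω = ψ ∘ φ has ωin(z, x) = φin(ψin(z, φout x), x) and ωout = ψout ∘ φout. Define the action on matrices over ℕ∞: for M : Xin × Xout → ℕ∞, (Mat φ M)(i, j) = ∑_{k ∈ φout⁻¹(j)} M(φin(i,k), k), where Xout is finite (or the sums are tsum in ℕ∞). Then Mat ψ (Mat φ M) = Mat (ψ ∘ φ) M. -/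
/-- Application of a wiring diagram `(φin, φout)` to a matrix over ℕ∞. -/
def MatApp {Xin Xout Yin Yout : Type*} [Fintype Xout] [DecidableEq Yout]
    (φin : Yin × Xout → Xin) (φout : Xout → Yout)
    (M : Xin × Xout → ℕ∞) : Yin × Yout → ℕ∞ :=
  fun p => ∑ k : {k : Xout // φout k = p.2}, M (φin (p.1, k.1), k.1)

/-- The wiring-diagram action on matrices over ℕ∞ is functorial. -/
theorem MatApp_comp {Xin Xout Yin Yout Zin Zout : Type*}
    [Fintype Xout] [Fintype Yout] [DecidableEq Yout] [DecidableEq Zout]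
    (φin : Yin × Xout → Xin) (φout : Xout → Yout)
    (ψin : Zin × Yout → Yin) (ψout : Yout → Zout)
    (M : Xin × Xout → ℕ∞) :
    MatApp ψin ψout (MatApp φin φout M) =
      MatApp (fun p : Zin × Xout => φin (ψin (p.1, φout p.2), p.2))
        (fun k => ψout (φout k)) M := by
  funext p
  obtain ⟨z, c⟩ := p
  simp only [MatApp]
  rw [Finset.sum_sigma']
  refine Finset.sum_nbij'
    (i := fun (x : Σ j : {j : Yout // ψout j = c}, {k : Xout // φout k = j.1}) =>
      (⟨x.2.1, by rw [x.2.2]; exact x.1.2⟩ : {k : Xout // ψout (φout k) = c}))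
    (j := fun (k : {k : Xout // ψout (φout k) = c}) =>
      (⟨⟨φout k.1, k.2⟩, ⟨k.1, rfl⟩⟩ : Σ j : {j : Yout // ψout j = c}, {k : Xout // φout k = j.1}))
    ?_ ?_ ?_ ?_ ?_
  · intros; exact Finset.mem_univ _
  · intros; exact Finset.mem_univ _
  · rintro ⟨⟨j, hj⟩, ⟨k, hk⟩⟩ _
    obtain rfl : φout k = j := hk
    rfl
  · rintro ⟨k, hk⟩ _; rfl
  · rintro ⟨⟨j, hj⟩, ⟨k, hk⟩⟩ _
    simp [hk]
end

section
/- The wiring-diagram action on matrices is monoidal: given wiring diagrams φ1 : X1 → Y1 and φ2 : X2 → Y2 (with data φᵢin : Yᵢin × Xᵢout → Xᵢin, φᵢout : Xᵢout → Yᵢout) and matrices M1 : X1in × X1out → ℕ∞, M2 : X2in × X2out → ℕ∞, the application of the product wiring diagram φ1 ⊞ φ2 (with (φ1⊞φ2)in((y1,y2),(x1,x2)) = (φ1in(y1,x1), φ2in(y2,x2)) and (φ1⊞φ2)out(x1,x2) = (φ1out x1, φ2out x2)) to the Kronecker product M1 ⊗ M2 equals the Kronecker product of the separate applications: Mat(φ1⊞φ2)(M1⊗M2)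 = Mat(φ1)(M1) ⊗ Mat(φ2)(M2). -/
/-- The wiring-diagram action on matrices is monoidal: applying the product wiring
diagram to a Kronecker product gives the Kronecker product of the applications. -/
theorem MatApp_monoidal {X1in X1out Y1in Y1out X2in X2out Y2in Y2out : Type*}
    [Fintype X1out] [Fintype X2out] [DecidableEq Y1out] [DecidableEq Y2out]
    (φ1in : Y1in × X1out → X1in) (φ1out : X1out → Y1out)
    (φ2in : Y2in × X2out → X2in) (φ2out : X2out → Y2out)
    (M1 : X1in × X1out → ℕ∞) (M2 : X2in × X2out → ℕ∞) :
    MatApp (fun p : (Y1in × Y2in) × (X1out × X2out) =>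
        (φ1in (p.1.1, p.2.1), φ2in (p.1.2, p.2.2)))
      (fun k : X1out × X2out => (φ1out k.1, φ2out k.2))
      (fun q : (X1in × X2in) × (X1out × X2out) =>
        M1 (q.1.1, q.2.1) * M2 (q.1.2, q.2.2)) =
      fun p : (Y1in × Y2in) × (Y1out × Y2out) =>
        MatApp φ1in φ1out M1 (p.1.1, p.2.1) * MatApp φ2in φ2out M2 (p.1.2, p.2.2) := by
  funext p
  unfold MatApp
  rw [Finset.sum_mul_sum]
  exact ((Fintype.sum_equiv
    ({ toFun := fun k => ⟨(k.1.1, k.2.1), by simp [k.1.2, k.2.2]⟩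
       invFun := fun k => (⟨k.1.1, congrArg Prod.fst k.2⟩, ⟨k.1.2, congrArg Prod.snd k.2⟩)
       left_inv := fun k => rfl
       right_inv := fun k => rfl } :
      { k // φ1out k = p.2.1 } × { k // φ2out k = p.2.2 } ≃
        { k : X1out × X2out // (φ1out k.1, φ2out k.2) = p.2 })
    _ _ (fun _ => rfl)).symm).trans (Fintype.sum_prod_type _)
end

section
/- Naturality of the steady-state matrix under wiring: let φ : X → Y be a wiring diagram with φin : Yin × Xout → Xin and φout : Xout → Yout, where Xout is finite. Let F = (S, r, u) be a discrete system on X, and let G = DS(φ)(F) = (S, φout ∘ r, (y,s) ↦ u(φin(y, r s), s)). Then for all i ∈ Yin and j ∈ Yout, Stst(G)(i,j) = ∑_{k : φout k = j} Stst(F)(φin(i,k), k), where Stst(F)(a,b) ∈ ℕ∞ is the cardinality of {s : S | r s = b ∧ u(a,s) = s}. -/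
universe u

open Classical in
lemma aux_finset_card {S : Type u} {ι : Type*} [DecidableEq ι]
    (r : S → ι) (q : ι → S → Prop) (t : Finset ι) :
    Cardinal.mk {s : S // r s ∈ t ∧ q (r s) s} =
      ∑ k ∈ t, Cardinal.mk {s : S // r s = k ∧ q k s} := by
  induction t using Finset.induction_on with
  | empty => simp
  | @insert a t ha ih =>
    rw [Finset.sum_insert ha, ← ih]
    have e1 : {s : S // r s ∈ insert a t ∧ q (r s) s} ≃
        {s : S // (r s = a ∧ q a s) ∨ (r s ∈ t ∧ q (r s) s)} := by
      apply Equiv.subtypeEquivRight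
      intro s
      constructor
      · rintro ⟨hm, hq⟩
        rcases Finset.mem_insert.mp hm with h | h
        · exact Or.inl ⟨h, h ▸ hq⟩
        · exact Or.inr ⟨h, hq⟩
      · rintro (⟨h, hq⟩ | ⟨h, hq⟩)
        · exact ⟨Finset.mem_insert.mpr (Or.inl h), h ▸ hq⟩
        · exact ⟨Finset.mem_insert.mpr (Or.inr h), hq⟩
    have hd : Disjoint (fun s : S => r s = a ∧ q a s)
        (fun s : S => r s ∈ t ∧ q (r s) s) := by
      intro c hcp hcq s hs
      exact absurd ((hcp s hs).1 ▸ (hcq s hs).1) ha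
    have e2 := subtypeOrEquiv _ _ hd
    rw [Cardinal.mk_congr (e1.trans e2), Cardinal.mk_sum, Cardinal.lift_id, Cardinal.lift_id]

/-- Naturality of the steady-state matrix under the wiring-diagram action. -/
theorem stst_natural {Xin Xout Yin Yout : Type*} {S : Type u} [Fintype Xout] [DecidableEq Yout]
    (φin : Yin × Xout → Xin) (φout : Xout → Yout)
    (r : S → Xout) (u : Xin × S → S)
    (i : Yin) (j : Yout) :
    Cardinal.mk {s : S // φout (r s) = j ∧ u (φin (i, r s), s) = s} =
      ∑ k : {k : Xout // φout k = j},
        Cardinal.mk {s : S // r s = k.1 ∧ u (φin (i, k.1), s) = s} := by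
  classical
  have h := aux_finset_card r (fun k s => u (φin (i, k), s) = s)
    (Finset.univ.filter fun k => φout k = j)
  have e : {s : S // φout (r s) = j ∧ u (φin (i, r s), s) = s} ≃
      {s : S // r s ∈ Finset.univ.filter (fun k => φout k = j) ∧ u (φin (i, r s), s) = s} :=
    Equiv.subtypeEquivRight fun s => by simp
  rw [Cardinal.mk_congr e, h,
    Finset.sum_subtype (p := fun k => φout k = j) (Finset.univ.filter fun k => φout k = j)
      (fun k => by simp) (fun k => Cardinal.mk {s : S // r s = k ∧ u (φin (i, k), s) = s})]
end

section
/- Composition of derivatives of wiring diagrams (linear version of the chain rule): let Φ = (Φin : Yin →ₗ Xin, Φmid : Xout →ₗ Xin, Φout : Xout →ₗ Yout) and Ψ = (Ψin : Zin →ₗ Yin, Ψmid : Yout →ₗ Yin, Ψout : Yout →ₗ Zout) be triples of linear maps between real vector spaces. Define the composite triple Ω by Ωin = Φin ∘ Ψin, Ωmid = Φmid + Φin ∘ Ψmid ∘ Φout, Ωout = Ψout ∘ Φout. Then the linear-system application is functorial: for a linear system M = (S, Min : Xin →ₗ S, Mmid : S →ₗ S, Mout : S →ₗ Xout), applying Ψ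 to the result of applying Φ to M equals applying Ω to M, where application of a triple Φ to M yields (S, Min ∘ Φin, Mmid + Min ∘ Φmid ∘ Mout, Φout ∘ Mout). -/
/-- Functoriality of the wiring-diagram action on linear systems: applying the
composite triple Ω = Ψ∘Φ equals applying Φ and then Ψ. -/
theorem LS_comp {Xin Xout Yin Yout Zin Zout S : Type*}
    [AddCommGroup Xin] [Module ℝ Xin] [AddCommGroup Xout] [Module ℝ Xout]
    [AddCommGroup Yin] [Module ℝ Yin] [AddCommGroup Yout] [Module ℝ Yout]
    [AddCommGroup Zin] [Module ℝ Zin] [AddCommGroup Zout] [Module ℝ Zout]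
    [AddCommGroup S] [Module ℝ S]
    (Φin : Yin →ₗ[ℝ] Xin) (Φmid : Xout →ₗ[ℝ] Xin) (Φout : Xout →ₗ[ℝ] Yout)
    (Ψin : Zin →ₗ[ℝ] Yin) (Ψmid : Yout →ₗ[ℝ] Yin) (Ψout : Yout →ₗ[ℝ] Zout)
    (Min : Xin →ₗ[ℝ] S) (Mmid : S →ₗ[ℝ] S) (Mout : S →ₗ[ℝ] Xout) :
    -- input component
    ((Min ∘ₗ Φin) ∘ₗ Ψin = Min ∘ₗ (Φin ∘ₗ Ψin)) ∧
    -- middle component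
    ((Mmid + Min ∘ₗ Φmid ∘ₗ Mout) + (Min ∘ₗ Φin) ∘ₗ Ψmid ∘ₗ (Φout ∘ₗ Mout) =
      Mmid + Min ∘ₗ (Φmid + Φin ∘ₗ Ψmid ∘ₗ Φout) ∘ₗ Mout) ∧
    -- output component
    (Ψout ∘ₗ (Φout ∘ₗ Mout) = (Ψout ∘ₗ Φout) ∘ₗ Mout) := by
  refine ⟨rfl, ?_, rfl⟩
  ext s
  simp [add_assoc]
end
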